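/- Let k be a field, T = k[[a,b]]/(a^2 b^2), and A = k[[x,y,u,v]]/(xy, yu, uv, vx, u^2, v^2). Then the k-algebra homomorphism T → A sending a ↦ x + v and b ↦ y + u is well-defined and injective. -/

import Mathlib

set_option synthInstance.maxHeartbeats 400000

open MvPowerSeries

/-- The ideal `(xy, yu, uv, vx, u², v²)` of `k[[x,y,u,v]]`, where
`x = X 0`, `y = X 1`, `u = X 2`, `v = X 3`. -/
noncomputable def Aideal (k : Type*) [Field k] : Ideal (MvPowerSeries (Fin 4) k) :=
  Ideal.span {(X 0 : MvPowerSeries (Fin 4) k) * X 1,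
    (X 1 : MvPowerSeries (Fin 4) k) * X 2,
    (X 2 : MvPowerSeries (Fin 4) k) * X 3,
    (X 3 : MvPowerSeries (Fin 4) k) * X 0,
    (X 2 : MvPowerSeries (Fin 4) k) ^ 2,
    (X 3 : MvPowerSeries (Fin 4) k) ^ 2}

/-!
The substitution `a ↦ x + v`, `b ↦ y + u` sends `a²b²` into the ideal of `A`, since every
monomial of `(x + v)²(y + u)²` is divisible by one of its generators. For injectivity, follow it
by the substitutions `k[[x,y,u,v]] → k[[a,b]]` given by `x ↦ a, u ↦ b, y, v ↦ 0` and by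
`v ↦ a, y ↦ b, x, u ↦ 0`. Both composites are the identity of `k[[a,b]]`, and they send the ideal
of `A` into `(b²)` and `(a²)` respectively. So a series whose image vanishes in `A` lies in
`(a²) ∩ (b²) = (a²b²)`.
-/

namespace MvPowerSeries

theorem X_pow_mul_X_pow_dvd {σ R : Type*} [Semiring R] {s t : σ} (hst : s ≠ t) {m n : ℕ}
    {f : MvPowerSeries σ R} (hs : X s ^ m ∣ f) (ht : X t ^ n ∣ f) : X s ^ m * X t ^ n ∣ f := by
  classical
  obtain ⟨g, rfl⟩ := hs
  refine mul_dvd_mul_left _ (X_pow_dvd_iff.mpr fun d hd => ?_)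
  have hshift : (Finsupp.single s m + d) t < n := by simpa [Finsupp.single_apply, hst] using hd
  simpa [X_pow_eq, coeff_add_monomial_mul] using X_pow_dvd_iff.mp ht _ hshift

end MvPowerSeries

section Substitutions

variable (R : Type*) [CommRing R]

noncomputable def substTA : Fin 2 → MvPowerSeries (Fin 4) R := ![X 0 + X 3, X 1 + X 2]

noncomputable def retractXU : Fin 4 → MvPowerSeries (Fin 2) R := ![X 0, 0, X 1, 0]

noncomputable def retractYV : Fin 4 → MvPowerSeries (Fin 2) R := ![0, X 1, 0, X 0]

variable {R}

theorem hasSubst_substTA : HasSubst (substTA R) :=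
  hasSubst_of_constantCoeff_zero fun i => by fin_cases i <;> simp [substTA]

theorem hasSubst_retractXU : HasSubst (retractXU R) :=
  hasSubst_of_constantCoeff_zero fun i => by fin_cases i <;> simp [retractXU]

theorem hasSubst_retractYV : HasSubst (retractYV R) :=
  hasSubst_of_constantCoeff_zero fun i => by fin_cases i <;> simp [retractYV]

theorem subst_retractXU_subst_substTA (f : MvPowerSeries (Fin 2) R) :
    subst (retractXU R) (subst (substTA R) f) = f := by
  have hX : (fun i => subst (retractXU R) (substTA R i)) = X := by
    funext i
    fin_cases i <;>
      simp only [substTA, Fin.zero_eta, Fin.mk_one, Matrix.cons_val_zero, Matrix.cons_val_one,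
        subst_add hasSubst_retractXU, subst_X hasSubst_retractXU] <;>
      simp [retractXU]
  rw [subst_comp_subst_apply hasSubst_substTA hasSubst_retractXU, hX, subst_self, id]

theorem subst_retractYV_subst_substTA (f : MvPowerSeries (Fin 2) R) :
    subst (retractYV R) (subst (substTA R) f) = f := by
  have hX : (fun i => subst (retractYV R) (substTA R i)) = X := by
    funext i
    fin_cases i <;>
      simp only [substTA, Fin.zero_eta, Fin.mk_one, Matrix.cons_val_zero, Matrix.cons_val_one,
        subst_add hasSubst_retractYV, subst_X hasSubst_retractYV] <;>
      simp [retractYV]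
  rw [subst_comp_subst_apply hasSubst_substTA hasSubst_retractYV, hX, subst_self, id]

end Substitutions

section Quotients

variable {k : Type*} [Field k]

theorem Aideal_le_comap_retractXU :
    Aideal k ≤ (Ideal.span {(X 1 : MvPowerSeries (Fin 2) k) ^ 2}).comap
      (substAlgHom hasSubst_retractXU) := by
  rw [Aideal, Ideal.span_le]
  simp only [Set.insert_subset_iff, Set.singleton_subset_iff, SetLike.mem_coe, Ideal.mem_comap,
    map_mul, map_pow, substAlgHom_X]
  simp [retractXU]

theorem Aideal_le_comap_retractYV :
    Aideal k ≤ (Ideal.span {(X 0 : MvPowerSeries (Fin 2) k) ^ 2}).comap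
      (substAlgHom hasSubst_retractYV) := by
  rw [Aideal, Ideal.span_le]
  simp only [Set.insert_subset_iff, Set.singleton_subset_iff, SetLike.mem_coe, Ideal.mem_comap,
    map_mul, map_pow, substAlgHom_X]
  simp [retractYV]

theorem span_le_comap_substTA :
    Ideal.span {(X 0 : MvPowerSeries (Fin 2) k) ^ 2 * X 1 ^ 2} ≤
      (Aideal k).comap (substAlgHom hasSubst_substTA) := by
  rw [Ideal.span_le, Set.singleton_subset_iff]
  have hgen : ∀ g ∈ ({X 0 * X 1, X 1 * X 2, X 2 * X 3, X 3 * X 0, X 2 ^ 2, X 3 ^ 2} :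
      Set (MvPowerSeries (Fin 4) k)), g ∈ Aideal k := fun g hg => Ideal.subset_span hg
  have hexpand : ((X 0 + X 3) ^ 2 * (X 1 + X 2) ^ 2 : MvPowerSeries (Fin 4) k) =
      X 0 * X 1 * (X 0 * X 1) + X 1 * X 2 * (2 * X 0 ^ 2) + X 2 ^ 2 * X 0 ^ 2 +
        X 3 * X 0 * (2 * (X 1 + X 2) ^ 2) + X 3 ^ 2 * (X 1 + X 2) ^ 2 := by ring
  simp only [SetLike.mem_coe, Ideal.mem_comap, map_mul, map_pow, substAlgHom_X]
  simp only [substTA, Matrix.cons_val_zero, Matrix.cons_val_one]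
  rw [hexpand]
  refine add_mem (add_mem (add_mem (add_mem ?_ ?_) ?_) ?_) ?_ <;>
    exact Ideal.mul_mem_right _ _ (hgen _ (by simp))

theorem mem_span_of_subst_substTA_mem_Aideal {f : MvPowerSeries (Fin 2) k}
    (hf : subst (substTA k) f ∈ Aideal k) :
    f ∈ Ideal.span {(X 0 : MvPowerSeries (Fin 2) k) ^ 2 * X 1 ^ 2} := by
  have hb := Aideal_le_comap_retractXU hf
  have ha := Aideal_le_comap_retractYV hf
  rw [Ideal.mem_comap, substAlgHom_apply, subst_retractXU_subst_substTA,
    Ideal.mem_span_singleton] at hb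
  rw [Ideal.mem_comap, substAlgHom_apply, subst_retractYV_subst_substTA,
    Ideal.mem_span_singleton] at ha
  exact Ideal.mem_span_singleton.mpr (X_pow_mul_X_pow_dvd (by decide) ha hb)

end Quotients

/-- Let `k` be a field, `T = k[[a,b]]/(a²b²)` and
`A = k[[x,y,u,v]]/(xy, yu, uv, vx, u², v²)`.  Then the `k`-algebra homomorphism `T → A`
sending `a ↦ x + v` and `b ↦ y + u` is well-defined (i.e. exists) and injective. -/
theorem T_to_A_welldefined_injective (k : Type*) [Field k] :
    ∃ φ : (MvPowerSeries (Fin 2) k ⧸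
        Ideal.span {(X 0 : MvPowerSeries (Fin 2) k) ^ 2 * X 1 ^ 2}) →ₐ[k]
      (MvPowerSeries (Fin 4) k ⧸ Aideal k),
      φ (Ideal.Quotient.mk _ (X 0)) =
        Ideal.Quotient.mk _ (X 0) + Ideal.Quotient.mk _ (X 3) ∧
      φ (Ideal.Quotient.mk _ (X 1)) =
        Ideal.Quotient.mk _ (X 1) + Ideal.Quotient.mk _ (X 2) ∧
      Function.Injective φ := by
  refine ⟨Ideal.quotientMapₐ _ _ span_le_comap_substTA, ?_, ?_, ?_⟩
  · simp only [Ideal.quotient_map_mkₐ, Ideal.Quotient.mkₐ_eq_mk, substAlgHom_X]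
    simp [substTA]
  · simp only [Ideal.quotient_map_mkₐ, Ideal.Quotient.mkₐ_eq_mk, substAlgHom_X]
    simp [substTA]
  · rw [injective_iff_map_eq_zero]
    intro x hx
    obtain ⟨f, rfl⟩ := Ideal.Quotient.mk_surjective x
    rw [Ideal.quotient_map_mkₐ, Ideal.Quotient.mkₐ_eq_mk, Ideal.Quotient.eq_zero_iff_mem,
      substAlgHom_apply] at hx
    exact Ideal.Quotient.eq_zero_iff_mem.mpr (mem_span_of_subst_substTA_mem_Aideal hx)
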